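/- arXiv:2406.03269 — 4 statements merged into one kernel-verified Lean document; each statement's English description precedes it below -/
import Mathlib

section
/- Let V be a real n×n matrix all of whose eigenvalues have positive real part (so that e^{-tV} decays). Then for row vector α and column vector β, the integral ∫₀^∞ α e^{-τV} β dτ equals α V⁻¹ β. -/
/-!
By the eigenvector form of the spectral mapping theorem, every point of the spectrum of `e^{-V}`
is `e^{-μ}` for an eigenvalue `μ` of `V`, so it lies in the open unit disc. Gelfand's formula then gives `‖e^{-kV}‖ = O(r^k)` for some `r < 1`, and writing
`t = s + ⌊t⌋` with `s ∈ [0, 1)` upgrades this to `‖e^{-tV}‖ = O(e^{-εt})`. Consequently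
`t ↦ -e^{-tV} V⁻¹` is an antiderivative of `e^{-tV}` that vanishes at infinity, the improper
fundamental theorem of calculus gives `∫₀^∞ e^{-tV} dt = V⁻¹`, and the linear functional
`M ↦ α ⬝ᵥ M *ᵥ β` commutes with the integral.
-/

open Matrix NormedSpace Filter Asymptotics Topology MeasureTheory Set

theorem isBigO_pow_natFloor_exp_log_mul {r : ℝ} (hr0 : 0 < r) (hr1 : r < 1) :
    (fun t : ℝ => r ^ ⌊t⌋₊) =O[atTop] fun t => Real.exp (Real.log r * t) := by
  refine IsBigO.of_bound r⁻¹ ?_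
  filter_upwards [eventually_ge_atTop 0] with t ht
  rw [Real.norm_of_nonneg (by positivity), Real.norm_of_nonneg (by positivity)]
  calc r ^ ⌊t⌋₊ = r ^ (⌊t⌋₊ : ℝ) := (Real.rpow_natCast r _).symm
    _ ≤ r ^ (t - 1) :=
      Real.rpow_le_rpow_of_exponent_ge hr0 hr1.le (by linarith [Nat.lt_floor_add_one t])
    _ = r⁻¹ * Real.exp (Real.log r * t) := by
      rw [Real.rpow_sub hr0, Real.rpow_one, Real.rpow_def_of_pos hr0, div_eq_inv_mul]

theorem integrableOn_Ioi_of_isBigO_exp_neg {E : Type*} [NormedAddCommGroup E] {f : ℝ → E}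
    {a b : ℝ} (hb : 0 < b) (hf : ContinuousOn f (Ici a))
    (ho : f =O[atTop] fun x => Real.exp (-b * x)) : IntegrableOn f (Ioi a) :=
  ((hf.locallyIntegrableOn measurableSet_Ici).integrableOn_of_isBigO_atTop ho
    ⟨Ioi b, Ioi_mem_atTop b, exp_neg_integrableOn_Ioi b hb⟩).mono_set Ioi_subset_Ici_self

section ComplexBanachAlgebra

variable {A : Type*} [NormedRing A] [NormedAlgebra ℂ A] [CompleteSpace A]

theorem isBigO_pow_of_spectralRadius_lt {x : A} {r : ℝ}
    (h : spectralRadius ℂ x < ENNReal.ofReal r) :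
    (fun k : ℕ => x ^ k) =O[atTop] fun k => r ^ k := by
  have hr : 0 < r := ENNReal.ofReal_pos.mp (pos_of_gt h)
  refine IsBigO.of_bound 1 ?_
  filter_upwards [(spectrum.pow_norm_pow_one_div_tendsto_nhds_spectralRadius x).eventually_lt_const
    h, eventually_ge_atTop 1] with k hk hk1
  rw [ENNReal.ofReal_lt_ofReal_iff hr, one_div,
    Real.rpow_inv_lt_iff_of_pos (norm_nonneg _) hr.le (by positivity), Real.rpow_natCast] at hk
  rw [one_mul, Real.norm_of_nonneg (pow_nonneg hr.le k)]
  exact hk.le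

variable [NormedAlgebra ℚ A]

theorem exp_neg_smul_eq_mul_pow_natFloor (a : A) (t : ℝ) :
    exp (-((t : ℂ) • a)) = exp (-(((t - ⌊t⌋₊ : ℝ) : ℂ) • a)) * exp (-a) ^ ⌊t⌋₊ := by
  rw [← NormedSpace.exp_nsmul, ← NormedSpace.exp_add_of_commute]
  · congr 1
    rw [← Nat.cast_smul_eq_nsmul ℂ]
    push_cast
    module
  · exact (((Commute.refl a).neg_right.smul_right _).smul_left _).neg_left

theorem exists_isBigO_exp_neg_smul {a : A} (h : spectralRadius ℂ (exp (-a)) < 1) :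
    ∃ ε > 0, (fun t : ℝ => exp (-((t : ℂ) • a))) =O[atTop] fun t => Real.exp (-ε * t) := by
  obtain ⟨r, -, hr, hr1⟩ := ENNReal.lt_iff_exists_real_btwn.mp h
  have hr0 : 0 < r := ENNReal.ofReal_pos.mp (pos_of_gt hr)
  have hr1 : r < 1 := by simpa using hr1
  refine ⟨-Real.log r, neg_pos.mpr (Real.log_neg hr0 hr1), ?_⟩
  obtain ⟨M, hM⟩ := (isCompact_Icc (a := (0 : ℝ)) (b := 1)).exists_bound_of_continuousOn
    (f := fun s : ℝ => exp (-((s : ℂ) • a))) (exp_continuous.comp (by fun_prop)).continuousOn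
  have hfract : (fun t : ℝ => exp (-(((t - ⌊t⌋₊ : ℝ) : ℂ) • a))) =O[atTop] fun _ => (1 : ℝ) := by
    refine IsBigO.of_bound M ?_
    filter_upwards [eventually_ge_atTop 0] with t ht
    simpa using hM _ ⟨sub_nonneg.mpr (Nat.floor_le ht), by linarith [Nat.lt_floor_add_one t]⟩
  have hpow := ((isBigO_pow_of_spectralRadius_lt hr).comp_tendsto tendsto_nat_floor_atTop).trans
    (isBigO_pow_natFloor_exp_log_mul hr0 hr1)
  simpa only [Function.comp_apply, neg_neg, one_mul, ← exp_neg_smul_eq_mul_pow_natFloor] using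
    hfract.mul hpow

end ComplexBanachAlgebra

section RealBanachAlgebra

variable {A : Type*} [NormedRing A] [NormedAlgebra ℝ A] [NormedAlgebra ℚ A] [CompleteSpace A]
  {a : A} {ε : ℝ}

theorem integrableOn_exp_neg_smul_Ioi (hε : 0 < ε)
    (hdecay : (fun t : ℝ => exp (-(t • a))) =O[atTop] fun t => Real.exp (-ε * t)) :
    IntegrableOn (fun t : ℝ => exp (-(t • a))) (Ioi 0) :=
  integrableOn_Ioi_of_isBigO_exp_neg hε (exp_continuous.comp (by fun_prop)).continuousOn hdecay

theorem integral_exp_neg_smul_Ioi {b : A} (hab : a * b = 1) (hε : 0 < ε)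
    (hdecay : (fun t : ℝ => exp (-(t • a))) =O[atTop] fun t => Real.exp (-ε * t)) :
    ∫ t in Ioi (0 : ℝ), exp (-(t • a)) = b := by
  have hderiv (t : ℝ) : HasDerivAt (fun u : ℝ => exp (-(u • a)) * -b) (exp (-(t • a))) t := by
    have := (hasDerivAt_exp_smul_const (-a) t).mul_const (-b)
    simpa only [mul_assoc, neg_mul_neg, hab, mul_one, smul_neg] using this
  have hlim : Tendsto (fun u : ℝ => exp (-(u • a)) * -b) atTop (𝓝 0) := by
    have := hdecay.trans_tendsto (Real.tendsto_exp_atBot.comp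
      (tendsto_id.const_mul_atTop_of_neg (neg_neg_iff_pos.mpr hε)))
    simpa using this.mul_const (-b)
  rw [integral_Ioi_of_hasDerivAt_of_tendsto' (fun t _ => hderiv t)
    (integrableOn_exp_neg_smul_Ioi hε hdecay) hlim]
  simp

end RealBanachAlgebra

-- The ℓ∞ operator norm is submultiplicative and makes complexification `M ↦ M.map (↑)` isometric.
attribute [local instance] Matrix.linftyOpNormedAddCommGroup Matrix.linftyOpNormedRing
  Matrix.linftyOpNormedAlgebra Matrix.linftyOpNormedSpace

namespace Matrix

open Module.End

variable {ι : Type*} [Fintype ι] [DecidableEq ι]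

theorem hasEigenvector_toLin'_exp {𝕂 : Type*} [RCLike 𝕂] {A : Matrix ι ι 𝕂} {μ : 𝕂}
    {v : ι → 𝕂} (h : HasEigenvector (toLin' A) μ v) :
    HasEigenvector (toLin' (exp A)) (exp μ) v := by
  refine hasEigenvector_iff.mpr ⟨mem_eigenspace_iff.mpr ?_, h.2⟩
  have hA := (exp_series_hasSum_exp' (𝕂 := 𝕂) A).map (mulVec.addMonoidHomLeft v)
    (continuous_id.matrix_mulVec continuous_const)
  have hμ := (exp_series_hasSum_exp' (𝕂 := 𝕂) μ).smul_const v
  refine hA.unique (hμ.congr_fun fun k => ?_)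
  have hpow := h.pow_apply k
  simp only [← toLin'_pow, toLin'_apply] at hpow
  simp [mulVec.addMonoidHomLeft, smul_mulVec, hpow, smul_smul]

theorem spectrum_exp_subset (A : Matrix ι ι ℂ) :
    spectrum ℂ (exp A) ⊆ Complex.exp '' spectrum ℂ A := by
  intro z hz
  rw [← spectrum_toLin'] at hz
  have hcomm : Commute (toLin' (exp A)) (toLin' A) :=
    (Commute.refl A).exp_left.map toLinAlgEquiv'
  -- `A` preserves the `z`-eigenspace of `exp A`, so it has an eigenvector `w` there.
  have hmaps := mapsTo_genEigenspace_of_comm hcomm z 1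
  have : Nontrivial (genEigenspace (toLin' (exp A)) z 1) :=
    Submodule.nontrivial_iff_ne_bot.mpr (HasEigenvalue.of_mem_spectrum hz)
  obtain ⟨μ, hμ⟩ := exists_eigenvalue ((toLin' A).restrict hmaps)
  obtain ⟨w, hw⟩ := hμ.exists_hasEigenvector
  have hAw : HasEigenvector (toLin' A) μ w :=
    ⟨eigenspace_restrict_le_eigenspace _ _ _ (Submodule.mem_map_of_mem hw.1), by simpa using hw.2⟩
  refine ⟨μ, spectrum_toLin' A ▸ (hasEigenvalue_of_hasEigenvector hAw).mem_spectrum, ?_⟩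
  have hexp := (hasEigenvector_toLin'_exp hAw).apply_eq_smul
  have hz : toLin' (exp A) w = z • w := mem_eigenspace_iff.mp w.2
  rw [Complex.exp_eq_exp_ℂ]
  exact smul_left_injective ℂ hAw.2 (hexp.symm.trans hz)

theorem spectralRadius_exp_neg_lt_one {A : Matrix ι ι ℂ} (h : ∀ μ ∈ spectrum ℂ A, 0 < μ.re) :
    spectralRadius ℂ (exp (-A)) < 1 := by
  rcases subsingleton_or_nontrivial (Matrix ι ι ℂ) with _ | _
  · simp [spectralRadius, spectrum.of_subsingleton]
  refine spectrum.spectralRadius_lt_of_forall_lt _ fun z hz => ?_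
  obtain ⟨μ, hμ, rfl⟩ := spectrum_exp_subset (-A) hz
  rw [← spectrum.neg_eq, Set.mem_neg] at hμ
  rw [← NNReal.coe_lt_coe, coe_nnnorm, Complex.norm_exp]
  simpa using h _ hμ

theorem linfty_opNorm_map_ofReal {m n : Type*} [Fintype m] [Fintype n] (M : Matrix m n ℝ) :
    ‖M.map ((↑) : ℝ → ℂ)‖ = ‖M‖ := by
  simp [linfty_opNorm_def]

theorem map_ofReal_exp (M : Matrix ι ι ℝ) : (exp M).map ((↑) : ℝ → ℂ) = exp (M.map (↑)) :=
  map_exp Complex.ofRealHom.mapMatrix (continuous_id.matrix_map Complex.continuous_ofReal) M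

theorem exists_isBigO_exp_neg_smul_of_re_pos {V : Matrix ι ι ℝ}
    (h : ∀ μ ∈ spectrum ℂ (V.map ((↑) : ℝ → ℂ)), 0 < μ.re) :
    ∃ ε > 0, (fun t : ℝ => exp (-(t • V))) =O[atTop] fun t => Real.exp (-ε * t) := by
  obtain ⟨ε, hε, hO⟩ :=
    exists_isBigO_exp_neg_smul (A := Matrix ι ι ℂ) (spectralRadius_exp_neg_lt_one h)
  have hmap (t : ℝ) : (exp (-(t • V))).map ((↑) : ℝ → ℂ) = exp (-((t : ℂ) • V.map (↑))) := by
    rw [map_ofReal_exp]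
    congr 1
    ext i j
    simp
  have hcomplex : (fun t : ℝ => exp (-(t • V))) =O[atTop]
      fun t : ℝ => exp (-((t : ℂ) • V.map ((↑) : ℝ → ℂ))) :=
    IsBigO.of_bound 1 (Eventually.of_forall fun t => by
      rw [one_mul, ← hmap, linfty_opNorm_map_ofReal])
  exact ⟨ε, hε, hcomplex.trans hO⟩

end Matrix

theorem stmt_5 (n : ℕ) (V : Matrix (Fin n) (Fin n) ℝ)
    (heig : ∀ μ ∈ spectrum ℂ (V.map (Complex.ofReal : ℝ → ℂ)), 0 < μ.re)
    (α β : Fin n → ℝ) :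
    ∫ τ in Set.Ioi (0:ℝ), α ⬝ᵥ (NormedSpace.exp (-(τ • V))).mulVec β
      = α ⬝ᵥ V⁻¹.mulVec β := by
  obtain ⟨ε, hε, hdecay⟩ := exists_isBigO_exp_neg_smul_of_re_pos heig
  have hV : IsUnit V.det := by
    have hunit : IsUnit (V.map ((↑) : ℝ → ℂ)) :=
      (spectrum.zero_notMem_iff ℂ).mp fun h => (heig 0 h).false
    have hdet : (V.map ((↑) : ℝ → ℂ)).det = V.det := (RingHom.map_det Complex.ofRealHom V).symm
    rw [isUnit_iff_isUnit_det, hdet, isUnit_iff_ne_zero, Complex.ofReal_ne_zero] at hunit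
    exact hunit.isUnit
  let L : Matrix (Fin n) (Fin n) ℝ →L[ℝ] ℝ := (LinearMap.applyₗ β ∘ₗ LinearMap.applyₗ α ∘ₗ
    (toLinearMap₂' ℝ : Matrix (Fin n) (Fin n) ℝ ≃ₗ[ℝ] _).toLinearMap).toContinuousLinearMap
  have hL (M : Matrix (Fin n) (Fin n) ℝ) : L M = α ⬝ᵥ M *ᵥ β := toLinearMap₂'_apply' (T := ℝ) M α β
  calc ∫ τ in Ioi (0 : ℝ), α ⬝ᵥ exp (-(τ • V)) *ᵥ β = ∫ τ in Ioi (0 : ℝ), L (exp (-(τ • V))) := by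
        simp only [hL]
    _ = L (∫ τ in Ioi (0 : ℝ), exp (-(τ • V))) :=
      L.integral_comp_comm (integrableOn_exp_neg_smul_Ioi hε hdecay)
    _ = L V⁻¹ := congrArg L (integral_exp_neg_smul_Ioi (mul_nonsing_inv V hV) hε hdecay)
    _ = α ⬝ᵥ V⁻¹ *ᵥ β := hL V⁻¹
end

section
/- The Laplace transform of the SEIR age-of-infection kernel: for s > 0, ∫₀^∞ e^{−sτ} a(τ) dτ = β₁/(b+γ₁+s) + β₂γ₁₂/((b+γ₂+δ+s)(b+γ₁+s)), where a(τ) = α e^{−τV} β with α = (1,0), β = (β₁,β₂)ᵀ and V as in the SEIR model. -/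
/-!
`V` is upper triangular, so `exp (-τ V)` is explicit: its diagonal is `e^{-λ₁ τ}, e^{-λ₂ τ}` with
`λ₁ = γ₁ + b`, `λ₂ = γ₂ + b + δ`, and its corner entry is `γ₁₂` times the divided difference of
`λ ↦ e^{-λ τ}` at `λ₁, λ₂` (which is `τ e^{-λ₁ τ}` when the eigenvalues coincide). Multiplying by
`e^{-s τ}` shifts both eigenvalues by `s`, and the divided difference of exponentials integrates
to `1 / (λ₁ λ₂)`; the result is `α (sI + V)⁻¹ β`.
-/

open Matrix MeasureTheory Set

theorem NormedSpace.exp_eq_one_add_of_mul_self_eq_zero {𝔸 : Type*} [Ring 𝔸] [Algebra ℚ 𝔸]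
    [TopologicalSpace 𝔸] [IsTopologicalRing 𝔸] {x : 𝔸} (hx : x * x = 0) :
    NormedSpace.exp x = 1 + x := by
  rw [NormedSpace.exp_eq_tsum_rat]
  dsimp only
  rw [tsum_eq_sum (s := Finset.range 2)]
  · simp [Finset.sum_range_succ]
  · intro n hn
    obtain ⟨m, rfl⟩ : ∃ m, n = m + 2 := ⟨n - 2, by simp only [Finset.mem_range, not_lt] at hn; omega⟩
    rw [pow_add, sq, hx, mul_zero, smul_zero]

theorem Matrix.exp_diagonal_fin_two (x y : ℝ) :
    NormedSpace.exp !![x, 0; 0, y] = !![Real.exp x, 0; 0, Real.exp y] := by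
  rw [← diagonal_vec2, exp_diagonal, diagonal_fin_two, Pi.exp_def, Real.exp_eq_exp_ℝ]
  rfl

theorem Matrix.fin_two_congr {α : Type*} {a b c d a' b' c' d' : α}
    (ha : a = a') (hb : b = b') (hc : c = c') (hd : d = d') :
    !![a, b; c, d] = !![a', b'; c', d'] := by
  subst ha hb hc hd; rfl

theorem Matrix.exp_smul_upperTriangular_self (t a c : ℝ) :
    NormedSpace.exp (t • !![a, c; 0, a])
      = !![Real.exp (a * t), c * (t * Real.exp (a * t)); 0, Real.exp (a * t)] := by
  have hsplit : t • !![a, c; 0, a] = !![a * t, 0; 0, a * t] + !![0, c * t; 0, 0] := by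
    simp [mul_comm]
  have hcomm : Commute !![a * t, 0; 0, a * t] !![0, c * t; 0, 0] := by
    simp [Commute, SemiconjBy, mul_comm]
  have hnil : !![0, c * t; 0, 0] * !![0, c * t; 0, 0] = (0 : Matrix (Fin 2) (Fin 2) ℝ) := by
    simp [← Matrix.ext_iff]
  have hone : 1 + !![0, c * t; 0, 0] = !![1, c * t; 0, (1 : ℝ)] := by
    simp [one_fin_two]
  rw [hsplit, exp_add_of_commute _ _ hcomm, exp_diagonal_fin_two,
    NormedSpace.exp_eq_one_add_of_mul_self_eq_zero hnil, hone, mul_fin_two]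
  apply fin_two_congr <;> ring

theorem Matrix.exp_smul_upperTriangular_of_ne {a d : ℝ} (h : a ≠ d) (t c : ℝ) :
    NormedSpace.exp (t • !![a, c; 0, d]) = !![Real.exp (a * t),
      c * ((Real.exp (a * t) - Real.exp (d * t)) / (a - d)); 0, Real.exp (d * t)] := by
  obtain ⟨u, rfl⟩ : ∃ u, c = u * (d - a) :=
    ⟨c / (d - a), (div_mul_cancel₀ _ (sub_ne_zero.mpr h.symm)).symm⟩
  have hPQ : !![1, u; 0, 1] * !![1, -u; 0, 1] = (1 : Matrix (Fin 2) (Fin 2) ℝ) := by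
    rw [mul_fin_two, one_fin_two]
    apply fin_two_congr <;> ring
  have hconj : t • !![a, u * (d - a); 0, d]
      = !![1, u; 0, 1] * !![a * t, 0; 0, d * t] * (!![1, u; 0, 1])⁻¹ := by
    trans !![a * t, u * (d - a) * t; 0, d * t]
    · simp [mul_comm]
    · rw [inv_eq_right_inv hPQ, mul_fin_two, mul_fin_two]
      apply fin_two_congr <;> ring
  rw [hconj, exp_conj _ _ (.of_mul_eq_one _ hPQ), exp_diagonal_fin_two, inv_eq_right_inv hPQ,
    mul_fin_two, mul_fin_two]
  refine fin_two_congr (by ring) ?_ (by ring) (by ring)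
  field_simp [sub_ne_zero.mpr h]
  ring

/-- The divided difference of `x ↦ exp (x * t)` at the nodes `a` and `d`, with its confluent
value `t * exp (a * t)` when `a = d`. -/
noncomputable def expDivDiff (a d t : ℝ) : ℝ :=
  if a = d then t * Real.exp (a * t) else (Real.exp (a * t) - Real.exp (d * t)) / (a - d)

theorem Matrix.exp_smul_upperTriangular (t a c d : ℝ) :
    NormedSpace.exp (t • !![a, c; 0, d])
      = !![Real.exp (a * t), c * expDivDiff a d t; 0, Real.exp (d * t)] := by
  unfold expDivDiff
  split_ifs with h
  · subst h
    exact exp_smul_upperTriangular_self t a c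
  · exact exp_smul_upperTriangular_of_ne h t c

theorem integrableOn_mul_exp_mul_Ioi_zero {a : ℝ} (ha : a < 0) :
    IntegrableOn (fun t => t * Real.exp (a * t)) (Ioi 0) := by
  refine (integrableOn_rpow_mul_exp_neg_mul_rpow (s := 1) (p := 1) (by norm_num) one_pos
    (neg_pos.mpr ha)).congr_fun (fun t _ => ?_) measurableSet_Ioi
  simp

theorem integral_mul_exp_mul_Ioi_zero {a : ℝ} (ha : a < 0) :
    ∫ t in Ioi 0, t * Real.exp (a * t) = 1 / a ^ 2 := by
  have h := Real.integral_rpow_mul_exp_neg_mul_Ioi two_pos (neg_pos.mpr ha)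
  rw [Real.Gamma_two, mul_one, Real.rpow_two, div_pow, one_pow, neg_sq] at h
  convert h using 3 with t
  norm_num

theorem exp_mul_mul_expDivDiff (s a d t : ℝ) :
    Real.exp (s * t) * expDivDiff a d t = expDivDiff (a + s) (d + s) t := by
  have hexp (x : ℝ) : Real.exp (s * t) * Real.exp (x * t) = Real.exp ((x + s) * t) := by
    rw [← Real.exp_add]; ring_nf
  unfold expDivDiff
  split_ifs with h h' h'
  · rw [mul_left_comm, hexp]
  · exact absurd (by rw [h]) h'
  · exact absurd (add_right_cancel h') h
  · rw [mul_div_assoc', mul_sub, hexp, hexp, add_sub_add_right_eq_sub]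

theorem integrableOn_expDivDiff {a d : ℝ} (ha : a < 0) (hd : d < 0) :
    IntegrableOn (expDivDiff a d) (Ioi 0) := by
  unfold expDivDiff
  split_ifs
  · exact integrableOn_mul_exp_mul_Ioi_zero ha
  · exact ((integrableOn_exp_mul_Ioi ha 0).sub (integrableOn_exp_mul_Ioi hd 0)).div_const _

theorem integral_expDivDiff {a d : ℝ} (ha : a < 0) (hd : d < 0) :
    ∫ t in Ioi 0, expDivDiff a d t = 1 / (a * d) := by
  unfold expDivDiff
  split_ifs with h
  · rw [integral_mul_exp_mul_Ioi_zero ha, h, sq]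
  · rw [integral_div, integral_sub (integrableOn_exp_mul_Ioi ha 0) (integrableOn_exp_mul_Ioi hd 0),
      integral_exp_mul_Ioi ha, integral_exp_mul_Ioi hd]
    simp only [mul_zero, Real.exp_zero]
    field_simp [sub_ne_zero.mpr h, ha.ne, hd.ne]
    ring

theorem stmt_10_general (b δ γ₁ γ₂ γ₁₂ β₁ β₂ : ℝ)
    (hb : 0 < b) (hδ : 0 < δ) (hγ₁ : 0 < γ₁) (hγ₂ : 0 < γ₂) :
    ∀ s > (0:ℝ),
      ∫ τ in Set.Ioi (0:ℝ), Real.exp (-s * τ) *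
        (![1, 0] ⬝ᵥ (NormedSpace.exp
            (-(τ • (!![γ₁ + b, -γ₁₂; 0, γ₂ + b + δ] : Matrix (Fin 2) (Fin 2) ℝ)))).mulVec ![β₁, β₂])
        = β₁ / (b + γ₁ + s) + β₂ * γ₁₂ / ((b + γ₂ + δ + s) * (b + γ₁ + s)) := by
  intro s hs
  set V : Matrix (Fin 2) (Fin 2) ℝ := !![γ₁ + b, -γ₁₂; 0, γ₂ + b + δ]
  set a := -(γ₁ + b) + -s
  set d := -(γ₂ + b + δ) + -s
  have ha : a < 0 := by linarith
  have hd : d < 0 := by linarith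
  have hintegrand (τ : ℝ) :
      Real.exp (-s * τ) * (![1, 0] ⬝ᵥ (NormedSpace.exp (-(τ • V))).mulVec ![β₁, β₂])
        = β₁ * Real.exp (a * τ) + β₂ * γ₁₂ * expDivDiff a d τ := by
    have hV : -(τ • V) = τ • !![-(γ₁ + b), γ₁₂; 0, -(γ₂ + b + δ)] := by
      rw [← smul_neg]
      simp [V]
    rw [hV, exp_smul_upperTriangular, ← exp_mul_mul_expDivDiff, add_mul, Real.exp_add,
      mulVec_fin_two, vec2_dotProduct']
    simp only [of_apply, cons_val', cons_val_zero, cons_val_one, cons_val_fin_one, one_mul, zero_mul,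
      add_zero]
    ring
  simp_rw [hintegrand]
  rw [integral_add ((integrableOn_exp_mul_Ioi ha 0).const_mul _)
      ((integrableOn_expDivDiff ha hd).const_mul _), integral_const_mul, integral_const_mul,
    integral_exp_mul_Ioi ha, integral_expDivDiff ha hd, mul_zero, Real.exp_zero]
  field_simp [ha.ne, hd.ne]
  ring

theorem stmt_10 (b δ γ₁ γ₂ γ₁₂ β₁ β₂ : ℝ)
    (hb : 0 < b) (hδ : 0 < δ) (hγ₁ : 0 < γ₁) (hγ₂ : 0 < γ₂) (hγ₁₂ : 0 < γ₁₂)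
    (hβ₁ : 0 < β₁) (hβ₂ : 0 < β₂) :
    ∀ s > (0:ℝ),
      ∫ τ in Set.Ioi (0:ℝ), Real.exp (-s * τ) *
        (![1, 0] ⬝ᵥ (NormedSpace.exp
            (-(τ • (!![γ₁ + b, -γ₁₂; 0, γ₂ + b + δ] : Matrix (Fin 2) (Fin 2) ℝ)))).mulVec ![β₁, β₂])
        = β₁ / (b + γ₁ + s) + β₂ * γ₁₂ / ((b + γ₂ + δ + s) * (b + γ₁ + s)) :=
  stmt_10_general b δ γ₁ γ₂ γ₁₂ β₁ β₂ hb hδ hγ₁ hγ₂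
end

section
/- Quasi-positivity implies forward invariance of the nonnegative orthant: if f : ℝⁿ → ℝⁿ is locally Lipschitz and satisfies fᵢ(x) ≥ 0 whenever x ≥ 0 and xᵢ = 0, then any solution of x' = f(x) starting in the nonnegative orthant stays in the nonnegative orthant for all forward times in its interval of existence. -/
open Set Filter Topology

/-!
The distance from `x t` to the nonnegative orthant, `‖(x t)⁻‖` in the sup norm, has upper right
Dini derivative at most `K ‖(x t)⁻‖` while `x` stays near a point of the orthant: for a coordinate
with `x t j ≤ 0`, quasi-positivity at the projection `(x t)⁺`, where that coordinate vanishes,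
together with the Lipschitz bound gives `-f (x t) j ≤ K ‖(x t)⁻‖`. Gronwall's inequality keeps the
distance zero on a short interval after any time at which it vanishes, and a continuity induction
over `[0, T]` does the rest.
-/

instance Pi.hasSolidNorm {ι : Type*} [Fintype ι] {E : ι → Type*}
    [∀ i, NormedAddCommGroup (E i)] [∀ i, Lattice (E i)] [∀ i, HasSolidNorm (E i)] :
    HasSolidNorm (∀ i, E i) where
  solid _ b hab := pi_norm_le_iff_of_nonneg (norm_nonneg b) |>.2 fun i ↦
    (HasSolidNorm.solid (hab i)).trans (norm_le_pi_norm b i)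

section

variable {ι : Type*}

def QuasiPositive (f : (ι → ℝ) → ι → ℝ) : Prop :=
  ∀ x, 0 ≤ x → ∀ i, x i = 0 → 0 ≤ f x i

variable [Fintype ι]

theorem QuasiPositive.neg_apply_le_mul_norm_negPart {f : (ι → ℝ) → ι → ℝ} (hq : QuasiPositive f)
    {K : NNReal} {U : Set (ι → ℝ)} (hK : LipschitzOnWith K f U) {y : ι → ℝ} (hy : y ∈ U)
    (hy' : y⁺ ∈ U) {j : ι} (hj : y j ≤ 0) : -f y j ≤ K * ‖y⁻‖ := by
  have hpos : 0 ≤ f y⁺ j := hq y⁺ (posPart_nonneg y) j (posPart_eq_zero.2 hj)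
  have hlip : ‖f y⁺ - f y‖ ≤ K * ‖y⁻‖ := by
    have hdiff : y⁺ - y = y⁻ := by linear_combination posPart_sub_negPart y
    simpa only [dist_eq_norm, hdiff] using hK.dist_le_mul y⁺ hy' y hy
  have hcoord := (norm_le_pi_norm (f y⁺ - f y) j).trans hlip
  rw [Pi.sub_apply, Real.norm_eq_abs, abs_le] at hcoord
  linarith [hcoord.2]

theorem HasDerivAt.eventually_negPart_le {u : ℝ → ℝ} {u' s c r : ℝ} (hu : HasDerivAt u u' s)
    (hc : 0 ≤ c) (hcr : c < r) (hneg : u s ≤ 0 → -u' ≤ c) :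
    ∀ᶠ z in 𝓝[>] s, (u z)⁻ ≤ (u s)⁻ + (z - s) * r := by
  have hrhs : ∀ᶠ z in 𝓝[>] s, 0 ≤ (u s)⁻ + (z - s) * r := by
    filter_upwards [self_mem_nhdsWithin] with z hz
    exact add_nonneg (negPart_nonneg _) (mul_nonneg (sub_pos.2 hz).le (hc.trans hcr.le))
  rcases lt_or_ge 0 (u s) with hs | hs
  · have hzpos : ∀ᶠ z in 𝓝[>] s, 0 < u z :=
      nhdsWithin_le_nhds (hu.continuousAt.eventually (lt_mem_nhds hs))
    filter_upwards [hzpos, hrhs] with z hz hz'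
    rwa [negPart_eq_zero.2 hz.le]
  · have hslope : ∀ᶠ z in 𝓝[>] s, slope (-u) s z < r :=
      (hu.neg.hasDerivWithinAt (s := Ioi s)).limsup_slope_le' (lt_irrefl s)
        ((hneg hs).trans_lt hcr)
    filter_upwards [hslope, hrhs, self_mem_nhdsWithin] with z hz hz' hzs
    have hzs : 0 < z - s := sub_pos.2 hzs
    rw [slope_def_field, div_lt_iff₀ hzs] at hz
    rw [negPart_eq_neg.2 hs] at hz' ⊢
    refine max_le ?_ (by linarith)
    simp only [Pi.neg_apply] at hz
    linarith

theorem HasDerivAt.eventually_norm_negPart_le {y : ℝ → ι → ℝ} {y' : ι → ℝ} {s c r : ℝ}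
    (hy : HasDerivAt y y' s) (hc : 0 ≤ c) (hcr : c < r) (hneg : ∀ j, y s j ≤ 0 → -y' j ≤ c) :
    ∀ᶠ z in 𝓝[>] s, ‖(y z)⁻‖ ≤ ‖(y s)⁻‖ + (z - s) * r := by
  have hcomp : ∀ j, ∀ᶠ z in 𝓝[>] s, (y z j)⁻ ≤ (y s j)⁻ + (z - s) * r := fun j ↦
    (hasDerivAt_pi.1 hy j).eventually_negPart_le hc hcr (hneg j)
  filter_upwards [eventually_all.2 hcomp, self_mem_nhdsWithin] with z hz hzs
  have hzs : 0 < z - s := sub_pos.2 hzs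
  refine (pi_norm_le_iff_of_nonneg
    (add_nonneg (norm_nonneg _) (mul_nonneg hzs.le (hc.trans hcr.le)))).2 fun j ↦ ?_
  have hsj : (y s j)⁻ ≤ ‖(y s)⁻‖ := by
    simpa [abs_of_nonneg (negPart_nonneg (y s j))] using norm_le_pi_norm (y s)⁻ j
  rw [Pi.negPart_apply, Real.norm_eq_abs, abs_of_nonneg (negPart_nonneg _)]
  exact (hz j).trans (by linarith)

theorem QuasiPositive.eventually_nonneg_of_hasDerivAt {f : (ι → ℝ) → ι → ℝ}
    (hq : QuasiPositive f) (hf : LocallyLipschitz f) {x : ℝ → ι → ℝ} {a b : ℝ} (hab : a < b)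
    (hx : ∀ t ∈ Icc a b, HasDerivAt x (f (x t)) t) (ha : 0 ≤ x a) :
    ∀ᶠ t in 𝓝[>] a, 0 ≤ x t := by
  obtain ⟨K, U, hU, hKU⟩ := hf (x a)
  have hUpos : U ∩ posPart ⁻¹' U ∈ 𝓝 (x a) :=
    inter_mem hU (continuous_posPart.continuousAt.preimage_mem_nhds (by rwa [posPart_eq_self.2 ha]))
  obtain ⟨c, hac, hc⟩ := mem_nhdsGE_iff_exists_Icc_subset.1 <| inter_mem (Icc_mem_nhdsGE hab)
    (nhdsWithin_le_nhds ((hx a ⟨le_rfl, hab.le⟩).continuousAt.preimage_mem_nhds hUpos))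
  set v : ℝ → ℝ := fun t ↦ ‖(x t)⁻‖
  have hcont : ContinuousOn v (Icc a c) := fun t ht ↦
    (continuous_negPart.continuousAt.comp (hx t (hc ht).1).continuousAt).norm.continuousWithinAt
  have hslope : ∀ t ∈ Ico a c, ∀ r, K * v t < r → ∃ᶠ z in 𝓝[>] t, (z - t)⁻¹ * (v z - v t) < r := by
    intro t ht r hr
    obtain ⟨htb, hxt, hxt'⟩ := hc ⟨ht.1, ht.2.le⟩
    obtain ⟨r', hr', hr'r⟩ := exists_between hr
    have hv := (hx t htb).eventually_norm_negPart_le (by positivity) hr'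
      fun j hj ↦ hq.neg_apply_le_mul_norm_negPart hKU hxt hxt' hj
    refine (hv.and self_mem_nhdsWithin).frequently.mono fun z ⟨hz, hzt⟩ ↦ ?_
    rw [inv_mul_lt_iff₀ (sub_pos.2 hzt)]
    have : (z - t) * r' < (z - t) * r := mul_lt_mul_of_pos_left hr'r (sub_pos.2 hzt)
    linarith
  have hva : v a ≤ 0 := by simp [v, negPart_eq_zero.2 ha]
  have hv := le_gronwallBound_of_liminf_deriv_right_le hcont hslope hva
    fun t _ ↦ (add_zero (K * v t)).ge
  filter_upwards [Icc_mem_nhdsGT hac] with t ht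
  have hvt : v t ≤ 0 := by simpa only [gronwallBound_ε0_δ0] using hv t ht
  exact negPart_eq_zero.1 (norm_le_zero_iff.1 hvt)

end

theorem stmt_12 (n : ℕ) (f : (Fin n → ℝ) → (Fin n → ℝ))
    (hf : LocallyLipschitz f)
    (hquasi : ∀ x, (∀ j, 0 ≤ x j) → ∀ i, x i = 0 → 0 ≤ f x i)
    (T : ℝ) (x : ℝ → Fin n → ℝ)
    (hx : ∀ t ∈ Set.Icc (0:ℝ) T, HasDerivAt x (f (x t)) t)
    (hx0 : ∀ j, 0 ≤ x 0 j) :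
    ∀ t ∈ Set.Icc (0:ℝ) T, ∀ j, 0 ≤ x t j := by
  have hq : QuasiPositive f := hquasi
  have hclosed : IsClosed ({t | 0 ≤ x t} ∩ Icc 0 T) := by
    rw [inter_comm]
    exact ContinuousOn.preimage_isClosed_of_isClosed
      (fun t ht ↦ (hx t ht).continuousAt.continuousWithinAt) isClosed_Icc isClosed_nonneg
  have hnonneg : Icc 0 T ⊆ {t | 0 ≤ x t} :=
    hclosed.Icc_subset_of_forall_mem_nhdsWithin hx0 fun a ⟨ha, haT⟩ ↦
      hq.eventually_nonneg_of_hasDerivAt hf haT.2 (fun t ht ↦ hx t ⟨haT.1.trans ht.1, ht.2⟩) ha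
  exact fun t ht ↦ hnonneg ht
end

section
/- The endemic equilibrium susceptible fraction of the SIR-PH-FA model satisfies s_e = s_dfe / R₀ where R₀ = s_dfe · α V⁻¹ β: if i ≠ 0 is a nonnegative equilibrium of i' = i(s·βαᵀ − V) for a fixed scalar s, then s · (α V⁻¹ β) = 1. -/
/-! Pairing the equilibrium equation `i V = s (i ⬝ᵥ β) α` with `V⁻¹ β` gives
`i ⬝ᵥ β = s (i ⬝ᵥ β) (α ⬝ᵥ V⁻¹ β)`, and `i ⬝ᵥ β ≠ 0` cancels. -/

open Matrix

theorem Matrix.dotProduct_eq_vecMul_dotProduct_nonsing_inv_mulVec {ι R : Type*} [Fintype ι]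
    [DecidableEq ι] [CommRing R] {V : Matrix ι ι R} (hV : IsUnit V.det) (x y : ι → R) :
    x ⬝ᵥ y = x ᵥ* V ⬝ᵥ V⁻¹ *ᵥ y := by
  rw [← dotProduct_mulVec, mulVec_mulVec, mul_nonsing_inv _ hV, one_mulVec]

theorem stmt_14_general (n : ℕ) (α β : Fin n → ℝ) (V : Matrix (Fin n) (Fin n) ℝ)
    (hV : IsUnit V.det) (s : ℝ) (i : Fin n → ℝ)
    (hib : i ⬝ᵥ β ≠ 0)
    (heq : ∀ j, s * (i ⬝ᵥ β) * α j = Vᵀ.mulVec i j) :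
    s * (α ⬝ᵥ V⁻¹.mulVec β) = 1 := by
  have hiV : i ᵥ* V = (s * (i ⬝ᵥ β)) • α := by
    ext j
    rw [← mulVec_transpose, ← heq j, Pi.smul_apply, smul_eq_mul]
  have key : i ⬝ᵥ β = (i ⬝ᵥ β) * (s * (α ⬝ᵥ V⁻¹ *ᵥ β)) :=
    calc i ⬝ᵥ β = i ᵥ* V ⬝ᵥ V⁻¹ *ᵥ β := dotProduct_eq_vecMul_dotProduct_nonsing_inv_mulVec hV i β
      _ = s * (i ⬝ᵥ β) * (α ⬝ᵥ V⁻¹ *ᵥ β) := by rw [hiV, smul_dotProduct, smul_eq_mul]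
      _ = (i ⬝ᵥ β) * (s * (α ⬝ᵥ V⁻¹ *ᵥ β)) := by ring
  exact (mul_eq_left₀ hib).mp key.symm

theorem stmt_14 (n : ℕ) (α β : Fin n → ℝ) (V : Matrix (Fin n) (Fin n) ℝ)
    (hV : IsUnit V.det) (s : ℝ) (i : Fin n → ℝ) (hi : i ≠ 0)
    (hib : i ⬝ᵥ β ≠ 0)
    (heq : ∀ j, s * (i ⬝ᵥ β) * α j = Vᵀ.mulVec i j) :
    s * (α ⬝ᵥ V⁻¹.mulVec β) = 1 :=
  stmt_14_general n α β V hV s i hib heq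
end
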